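/- arXiv:1609.08745 — 2 statements merged into one kernel-verified Lean document; each statement's English description precedes it below -/
import Mathlib

section
/- Let θ be a complex number, a, q ∈ ℤ[i] with q ≠ 0 and gcd(a,q) = 1, and suppose θ = a/q + γ where |γ| ≤ C|q|^{-2} with C := 2 + √2. If 0 ≤ Δ₁, Δ₂ < 1/(√8·|q|) and 1 ≤ z ≤ |q|²/(8C²), then there is no n ∈ ℤ[i] with 0 < N(n) ≤ z, ‖Im(nθ)‖ ≤ Δ₁ and ‖Re(nθ)‖ ≤ Δ₂; that is, Σ_θ(z, Δ₁, Δ₂) = 0. -/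
/-- Distance from a real number to the nearest integer. -/
noncomputable def dInt (t : ℝ) : ℝ := min (Int.fract t) (1 - Int.fract t)

/-- The norm `N(n) = |n|²` of a Gaussian integer, as a real number. -/
noncomputable def Nm (n : GaussianInt) : ℝ := ‖GaussianInt.toComplex n‖ ^ 2

/-- The complex absolute value of a Gaussian integer. -/
noncomputable def absG (n : GaussianInt) : ℝ := ‖GaussianInt.toComplex n‖

/-!
Let `m` be the Gaussian integer nearest to `nθ`. The Gaussian integer `na - mq` equals
`q (nθ - m) - q n γ`, and the hypotheses bound the two terms in absolute value by `< 1/2` and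
`≤ 1/2`, so `na = mq`. Coprimality gives `q ∣ n`, hence `|q|² ≤ N(n) ≤ z`, which is incompatible with
`z ≤ |q|² / (8C²)`.
-/

open GaussianInt

local notation "ℤ[i]" => GaussianInt

lemma dInt_eq_abs_sub_round (t : ℝ) : dInt t = |t - round t| :=
  (abs_sub_round_eq_min t).symm

lemma dInt_nonneg (t : ℝ) : 0 ≤ dInt t := by
  rw [dInt_eq_abs_sub_round]
  exact abs_nonneg _

namespace GaussianInt

lemma sq_norm_toComplex (x : ℤ[i]) : ‖(x : ℂ)‖ ^ 2 = x.norm := by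
  rw [Complex.sq_norm, intCast_real_norm]

lemma eq_zero_of_norm_toComplex_lt_one {x : ℤ[i]} (hx : ‖(x : ℂ)‖ < 1) : x = 0 := by
  by_contra hx0
  have h1 : (1 : ℝ) ≤ x.norm := by exact_mod_cast norm_pos.mpr hx0
  rw [← sq_norm_toComplex] at h1
  nlinarith [_root_.norm_nonneg (x : ℂ)]

noncomputable def nearest (w : ℂ) : ℤ[i] := ⟨round w.re, round w.im⟩

lemma sq_norm_sub_nearest (w : ℂ) :
    ‖w - nearest w‖ ^ 2 = dInt w.re ^ 2 + dInt w.im ^ 2 := by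
  rw [Complex.sq_norm, Complex.normSq_apply, Complex.sub_re, Complex.sub_im, nearest,
    re_toComplex, im_toComplex, dInt_eq_abs_sub_round, dInt_eq_abs_sub_round, sq_abs, sq_abs, sq, sq]

lemma norm_sub_nearest_lt {w : ℂ} {ε : ℝ} (hre : dInt w.re < ε) (him : dInt w.im < ε) :
    ‖w - nearest w‖ < Real.sqrt 2 * ε := by
  have hε : 0 < ε := (dInt_nonneg _).trans_lt hre
  refine lt_of_pow_lt_pow_left₀ 2 (by positivity) ?_
  rw [sq_norm_sub_nearest, mul_pow, Real.sq_sqrt zero_le_two]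
  nlinarith [dInt_nonneg w.re, dInt_nonneg w.im]

end GaussianInt

lemma one_le_Nm {x : ℤ[i]} (hx : x ≠ 0) : 1 ≤ Nm x := by
  rw [Nm, sq_norm_toComplex]
  exact_mod_cast norm_pos.mpr hx

lemma Nm_mul (x y : ℤ[i]) : Nm (x * y) = Nm x * Nm y := by
  rw [Nm, Nm, Nm, toComplex_mul, norm_mul, mul_pow]

lemma Nm_le_Nm_mul_right (x : ℤ[i]) {y : ℤ[i]} (hy : y ≠ 0) : Nm x ≤ Nm (x * y) := by
  rw [Nm_mul]
  exact le_mul_of_one_le_right (sq_nonneg _) (one_le_Nm hy)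

lemma dvd_of_norm_mul_sub_lt {θ : ℂ} {a q n m : ℤ[i]} {C : ℝ} (hq : q ≠ 0) (hcop : IsCoprime a q)
    (hθ : ‖θ - a / q‖ ≤ C / ‖(q : ℂ)‖ ^ 2)
    (h : ‖(q : ℂ)‖ * ‖n * θ - m‖ + C * ‖(n : ℂ)‖ / ‖(q : ℂ)‖ < 1) : q ∣ n := by
  have hq' : (q : ℂ) ≠ 0 := toComplex_eq_zero.not.mpr hq
  have hQ : 0 < ‖(q : ℂ)‖ := norm_pos_iff.mpr hq'
  have hx : ((n * a - m * q : ℤ[i]) : ℂ) = q * (n * θ - m) - q * n * (θ - a / q) := by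
    rw [toComplex_sub, toComplex_mul, toComplex_mul]
    field_simp
    ring
  have hsmall : ‖((n * a - m * q : ℤ[i]) : ℂ)‖ < 1 :=
    calc ‖((n * a - m * q : ℤ[i]) : ℂ)‖
        ≤ ‖(q : ℂ)‖ * ‖n * θ - m‖ + ‖(q : ℂ)‖ * ‖(n : ℂ)‖ * ‖θ - a / q‖ := by
          rw [hx, ← norm_mul, ← norm_mul, ← norm_mul]
          exact norm_sub_le _ _
      _ ≤ ‖(q : ℂ)‖ * ‖n * θ - m‖ + ‖(q : ℂ)‖ * ‖(n : ℂ)‖ * (C / ‖(q : ℂ)‖ ^ 2) := by gcongr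
      _ = ‖(q : ℂ)‖ * ‖n * θ - m‖ + C * ‖(n : ℂ)‖ / ‖(q : ℂ)‖ := by field_simp
      _ < 1 := h
  have hna : n * a = m * q := sub_eq_zero.mp (eq_zero_of_norm_toComplex_lt_one hsmall)
  exact hcop.symm.dvd_of_dvd_mul_right ⟨m, by rw [hna, mul_comm]⟩

theorem no_small_fractional_parts_general (θ : ℂ) (a q : GaussianInt) (hq : q ≠ 0)
    (hcop : IsCoprime a q)
    (hγ : ‖θ - GaussianInt.toComplex a / GaussianInt.toComplex q‖ ≤
      (2 + Real.sqrt 2) / absG q ^ 2)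
    (z Δ₁ Δ₂ : ℝ) (hΔ₁ : Δ₁ < 1 / (Real.sqrt 8 * absG q))
    (hΔ₂ : Δ₂ < 1 / (Real.sqrt 8 * absG q))
    (hz2 : z ≤ absG q ^ 2 / (8 * (2 + Real.sqrt 2) ^ 2)) :
    {n : GaussianInt | 0 < Nm n ∧ Nm n ≤ z ∧
      dInt ((GaussianInt.toComplex n * θ).im) ≤ Δ₁ ∧
      dInt ((GaussianInt.toComplex n * θ).re) ≤ Δ₂} = ∅ := by
  set C := 2 + Real.sqrt 2
  set Q := absG q
  have hQ : 0 < Q := norm_pos_iff.mpr (toComplex_eq_zero.not.mpr hq)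
  have hC : 2 ≤ C := le_add_of_nonneg_right (Real.sqrt_nonneg 2)
  have hsqrt8 : Real.sqrt 8 = 2 * Real.sqrt 2 := by
    rw [show (8 : ℝ) = 2 ^ 2 * 2 by norm_num, Real.sqrt_mul (by positivity), Real.sqrt_sq two_pos.le]
  refine Set.eq_empty_of_forall_notMem fun n ⟨hn0, hnz, him, hre⟩ => ?_
  have hm : Q * ‖n * θ - nearest (n * θ)‖ < 1 / 2 := by
    have := norm_sub_nearest_lt (hre.trans_lt hΔ₂) (him.trans_lt hΔ₁)
    calc Q * ‖n * θ - nearest (n * θ)‖ < Q * (Real.sqrt 2 * (1 / (Real.sqrt 8 * Q))) := by gcongr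
      _ = 1 / 2 := by rw [hsqrt8]; field_simp
  have hn : C * ‖(n : ℂ)‖ / Q ≤ 1 / 2 := by
    rw [div_le_iff₀ hQ]
    refine (pow_le_pow_iff_left₀ (by positivity) (by positivity) two_ne_zero).mp ?_
    have : ‖(n : ℂ)‖ ^ 2 * (8 * C ^ 2) ≤ Q ^ 2 := (le_div_iff₀ (by positivity)).mp (hnz.trans hz2)
    nlinarith
  obtain ⟨c, rfl⟩ := dvd_of_norm_mul_sub_lt (n := n) (m := nearest (n * θ)) hq hcop hγ
    (show Q * _ + C * _ / Q < 1 by linarith)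
  have hc : c ≠ 0 := by rintro rfl; simp [Nm] at hn0
  have hQn : Q ^ 2 ≤ z := (Nm_le_Nm_mul_right q hc).trans hnz
  have hz : z < Q ^ 2 := by
    refine hz2.trans_lt ((div_lt_iff₀ (by positivity)).mpr ?_)
    exact lt_mul_of_one_lt_right (by positivity) (by nlinarith)
  linarith

theorem no_small_fractional_parts (θ : ℂ) (a q : GaussianInt) (hq : q ≠ 0)
    (hcop : IsCoprime a q)
    (hγ : ‖θ - GaussianInt.toComplex a / GaussianInt.toComplex q‖ ≤
      (2 + Real.sqrt 2) / absG q ^ 2)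
    (z Δ₁ Δ₂ : ℝ) (hΔ₁0 : 0 ≤ Δ₁) (hΔ₁ : Δ₁ < 1 / (Real.sqrt 8 * absG q))
    (hΔ₂0 : 0 ≤ Δ₂) (hΔ₂ : Δ₂ < 1 / (Real.sqrt 8 * absG q))
    (hz1 : 1 ≤ z) (hz2 : z ≤ absG q ^ 2 / (8 * (2 + Real.sqrt 2) ^ 2)) :
    {n : GaussianInt | 0 < Nm n ∧ Nm n ≤ z ∧
      dInt ((GaussianInt.toComplex n * θ).im) ≤ Δ₁ ∧
      dInt ((GaussianInt.toComplex n * θ).re) ≤ Δ₂} = ∅ :=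
  no_small_fractional_parts_general θ a q hq hcop hγ z Δ₁ Δ₂ hΔ₁ hΔ₂ hz2
end

section
/- There is an absolute constant c > 0 with the following property. Let θ be a complex number, a, q ∈ ℤ[i] with q ≠ 0 and gcd(a,q) = 1, and suppose θ = a/q + γ where |γ| ≤ C|q|^{-2} with C := 2 + √2. Then for all y, z ≥ 1, one has G_θ(y,z) := ∑_{n ∈ ℤ[i], 0 < N(n) ≤ z} min{‖Im(nθ)‖^{-1}, √y}^{1/2} · min{‖Re(nθ)‖^{-1}, √y}^{1/2} ≤ c·(1 + z/|q|²)·(y^{1/2} + |q|²)·(log 2y)², where min{‖t‖^{-1}, √y} is interpreted as √y when ‖t‖ = 0. -/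
/-- `min{‖t‖⁻¹, √y}`, interpreted as `√y` when `‖t‖ = 0`. -/
noncomputable def minInv (t y : ℝ) : ℝ :=
  if dInt t = 0 then Real.sqrt y else min (dInt t)⁻¹ (Real.sqrt y)

/-- The sum `G_θ(y,z)`. -/
noncomputable def Gsum (θ : ℂ) (y z : ℝ) : ℝ :=
  ∑ᶠ n ∈ {n : GaussianInt | 0 < Nm n ∧ Nm n ≤ z},
    Real.sqrt (minInv ((GaussianInt.toComplex n * θ).im) y) *
      Real.sqrt (minInv ((GaussianInt.toComplex n * θ).re) y)

/-!
Cut the frequencies `n` into boxes of side `L ≈ |q|/15`, and `[0, 1)` into `M ≈ 4|q|` cells of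
length `1/M`. Two frequencies lying in the same box whose products with `θ` have real and
imaginary parts in the same cells mod `1` differ by some `Δ` with `|Δ| ≤ |q|/10` and
`|Δθ - k| < √2/M` for a Gaussian integer `k`. As `q ∤ Δ` and `a` is coprime to `q`,
`|Δa/q - k| ≥ 1/|q|`, which the error `|Δ(θ - a/q)|` is too small to bridge, so `Δ = 0`.
Thus each box and pair of cells carries at most one term, and a cell `j ≥ 1` cells away from
the nearest integer bounds `min{‖t‖⁻¹, √y}` by `M/j`. The sum is therefore at most the number
of boxes, `O(1 + z/|q|²)`, times `(y^{1/4} + ∑_{j<M} √(M/j))² = O(√y + |q|²)`; the logarithmic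
factor is not needed.
-/

open Finset

section Cells

noncomputable def cell (M : ℕ) (t : ℝ) : ℕ := ⌊Int.fract t * M⌋₊

variable {M : ℕ}

lemma cell_lt (hM : 0 < M) (t : ℝ) : cell M t < M := by
  rw [cell, Nat.floor_lt (by positivity)]
  exact mul_lt_of_lt_one_left (by positivity) (Int.fract_lt_one t)

lemma abs_fract_sub_fract_lt_of_cell_eq (hM : 0 < M) {t t' : ℝ} (h : cell M t = cell M t') :
    |Int.fract t - Int.fract t'| < 1 / M := by
  have hfloor : ⌊Int.fract t * M⌋ = ⌊Int.fract t' * M⌋ := by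
    rw [← Int.natCast_floor_eq_floor (by positivity), ← Int.natCast_floor_eq_floor (by positivity)]
    exact congrArg _ h
  have := Int.abs_sub_lt_one_of_floor_eq_floor hfloor
  rw [← sub_mul, abs_mul, Nat.abs_cast] at this
  rwa [lt_div_iff₀ (by positivity)]

lemma cell_dist_div_le_dInt (hM : 0 < M) (t : ℝ) :
    (min (cell M t) (M - 1 - cell M t) : ℕ) / (M : ℝ) ≤ dInt t := by
  have hlt := cell_lt hM t
  have hlo : (cell M t : ℝ) ≤ Int.fract t * M := Nat.floor_le (by positivity)
  have hhi : Int.fract t * M < cell M t + 1 := Nat.lt_floor_add_one _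
  have hcast : ((M - 1 - cell M t : ℕ) : ℝ) = M - 1 - cell M t := by
    rw [Nat.cast_sub (by omega), Nat.cast_sub (by omega), Nat.cast_one]
  rw [div_le_iff₀ (by positivity), dInt, min_mul_of_nonneg _ _ (by positivity), Nat.cast_min]
  exact min_le_min hlo (by rw [hcast]; linarith)

lemma minInv_le_sqrt (t y : ℝ) : minInv t y ≤ √y := by
  unfold minInv
  split_ifs
  exacts [le_rfl, min_le_right _ _]

noncomputable def distWeight (M : ℕ) (y : ℝ) (j : ℕ) : ℝ := if j = 0 then √√y else √(M / j)

lemma distWeight_nonneg (M : ℕ) (y : ℝ) (j : ℕ) : 0 ≤ distWeight M y j := by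
  unfold distWeight
  split_ifs <;> positivity

lemma sqrt_minInv_le_distWeight (hM : 0 < M) (t y : ℝ) :
    √(minInv t y) ≤ distWeight M y (min (cell M t) (M - 1 - cell M t)) := by
  set j := min (cell M t) (M - 1 - cell M t)
  unfold distWeight
  split_ifs with hj
  · exact Real.sqrt_le_sqrt (minInv_le_sqrt t y)
  apply Real.sqrt_le_sqrt
  have hpos : 0 < (j : ℝ) / M := by positivity
  have hd : (j : ℝ) / M ≤ dInt t := cell_dist_div_le_dInt hM t
  rw [minInv, if_neg (hpos.trans_le hd).ne']
  calc min (dInt t)⁻¹ √y ≤ (dInt t)⁻¹ := min_le_left _ _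
    _ ≤ ((j : ℝ) / M)⁻¹ := inv_anti₀ hpos hd
    _ = M / j := inv_div _ _

end Cells

lemma sum_inv_sqrt_succ_le (m : ℕ) : ∑ j ∈ range m, (√(j + 1))⁻¹ ≤ 2 * √m := by
  induction m with
  | zero => simp
  | succ m ih =>
    rw [sum_range_succ, Nat.cast_succ]
    have hm := Real.sq_sqrt (Nat.cast_nonneg (α := ℝ) m)
    have hm1 := Real.sq_sqrt (by positivity : (0 : ℝ) ≤ m + 1)
    have hmono : √(m : ℝ) ≤ √(m + 1) := Real.sqrt_le_sqrt (by linarith)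
    have hstep : (√((m : ℝ) + 1))⁻¹ ≤ 2 * √(m + 1) - 2 * √m := by
      rw [inv_le_iff_one_le_mul₀ (by positivity)]
      nlinarith [Real.sqrt_nonneg (m : ℝ)]
    linarith

lemma sum_distWeight_le (M : ℕ) (y : ℝ) : ∑ j ∈ range M, distWeight M y j ≤ √√y + 2 * M := by
  cases M with
  | zero => simp
  | succ m =>
    rw [sum_range_succ']
    have hsucc : ∀ j ∈ range m, distWeight (m + 1) y (j + 1) = √(↑(m + 1)) * (√(j + 1))⁻¹ := by
      intro j _
      rw [distWeight, if_neg j.succ_ne_zero, Real.sqrt_div' _ (by positivity), div_eq_mul_inv,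
        Nat.cast_succ j]
    have hsqrt : √(m : ℝ) ≤ √(↑(m + 1)) := Real.sqrt_le_sqrt (by simp)
    have hsq := Real.mul_self_sqrt (Nat.cast_nonneg (α := ℝ) (m + 1))
    rw [sum_congr rfl hsucc, ← mul_sum, distWeight, if_pos rfl]
    nlinarith [sum_inv_sqrt_succ_le m, Real.sqrt_nonneg (↑(m + 1) : ℝ)]

lemma sum_range_comp_min_reflect_le {β : Type*} [AddCommMonoid β] [LinearOrder β]
    [IsOrderedAddMonoid β] {f : ℕ → β} (hf : ∀ j, 0 ≤ f j) (M : ℕ) :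
    ∑ i ∈ range M, f (min i (M - 1 - i)) ≤ 2 • ∑ j ∈ range M, f j := by
  calc ∑ i ∈ range M, f (min i (M - 1 - i)) ≤ ∑ i ∈ range M, (f i + f (M - 1 - i)) := by
        gcongr with i
        rcases min_choice i (M - 1 - i) with h | h <;> rw [h]
        exacts [le_add_of_nonneg_right (hf _), le_add_of_nonneg_left (hf _)]
    _ = 2 • ∑ j ∈ range M, f j := by rw [sum_add_distrib, sum_range_reflect, two_nsmul]

lemma sum_distWeight_min_le (M : ℕ) (y : ℝ) :
    ∑ i ∈ range M, distWeight M y (min i (M - 1 - i)) ≤ 2 * √√y + 4 * M := by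
  have := sum_range_comp_min_reflect_le (distWeight_nonneg M y) M
  rw [two_nsmul] at this
  linarith [sum_distWeight_le M y]

section Approximation

lemma Nm_eq_sq_add_sq (n : GaussianInt) : Nm n = (n.re : ℝ) ^ 2 + (n.im : ℝ) ^ 2 := by
  rw [Nm, Complex.sq_norm, Complex.normSq_apply, ← GaussianInt.intCast_re,
    ← GaussianInt.intCast_im]
  ring

lemma one_le_absG {w : GaussianInt} (hw : w ≠ 0) : 1 ≤ absG w := by
  have hnorm : (1 : ℝ) ≤ absG w ^ 2 := by
    rw [absG, Complex.sq_norm, ← GaussianInt.intCast_real_norm]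
    exact_mod_cast GaussianInt.norm_pos.2 hw
  have : 0 ≤ absG w := norm_nonneg _
  nlinarith

lemma absG_le_absG_of_dvd {q w : GaussianInt} (h : q ∣ w) (hw : w ≠ 0) : absG q ≤ absG w := by
  obtain ⟨c, rfl⟩ := h
  have hc : c ≠ 0 := right_ne_zero_of_mul hw
  rw [absG, absG, map_mul, norm_mul]
  exact le_mul_of_one_le_right (norm_nonneg _) (one_le_absG hc)

lemma absG_le_sqrt_two_mul {w : GaussianInt} {B : ℝ} (hre : |(w.re : ℝ)| ≤ B)
    (him : |(w.im : ℝ)| ≤ B) : absG w ≤ √2 * B := by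
  rw [GaussianInt.intCast_re] at hre
  rw [GaussianInt.intCast_im] at him
  exact (Complex.norm_le_sqrt_two_mul_max _).trans (by gcongr; exact max_le hre him)

variable {θ : ℂ} {a q : GaussianInt}

lemma inv_absG_le_norm_mul_div_sub (hq : q ≠ 0) (hco : IsCoprime a q) {Δ : GaussianInt}
    (hΔ : ¬ q ∣ Δ) (k : GaussianInt) : (absG q)⁻¹ ≤ ‖(Δ : ℂ) * (a / q) - k‖ := by
  have hne : Δ * a - k * q ≠ 0 := fun h ↦
    hΔ (hco.symm.dvd_of_dvd_mul_right ⟨k, by rw [sub_eq_zero.1 h, mul_comm]⟩)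
  have hq' : (q : ℂ) ≠ 0 := GaussianInt.toComplex_eq_zero.not.2 hq
  have heq : (Δ : ℂ) * (a / q) - k = ((Δ * a - k * q : GaussianInt) : ℂ) / q := by
    simp only [map_sub, map_mul]
    field_simp
  rw [heq, norm_div, ← absG, ← absG, inv_eq_one_div]
  exact div_le_div_of_nonneg_right (one_le_absG hne) (norm_nonneg _)

lemma inv_two_mul_absG_le_norm_mul_sub (hq : q ≠ 0) (hco : IsCoprime a q)
    (hθ : ‖θ - a / q‖ ≤ (2 + √2) / absG q ^ 2) {Δ : GaussianInt} (hΔ0 : Δ ≠ 0)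
    (hΔ : absG Δ ≤ absG q / 10) (k : GaussianInt) : (2 * absG q)⁻¹ ≤ ‖(Δ : ℂ) * θ - k‖ := by
  have hA := one_le_absG hq
  have hndvd : ¬ q ∣ Δ := fun h ↦ by linarith [absG_le_absG_of_dvd h hΔ0]
  have hsplit : (Δ : ℂ) * (a / q) - k = ((Δ : ℂ) * θ - k) - Δ * (θ - a / q) := by ring
  have herr : ‖(Δ : ℂ) * (θ - a / q)‖ ≤ (absG q / 10) * ((2 + √2) / absG q ^ 2) := by
    rw [norm_mul]
    exact mul_le_mul hΔ hθ (norm_nonneg _) (by positivity)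
  have hgap : (absG q / 10) * ((2 + √2) / absG q ^ 2) ≤ (absG q)⁻¹ - (2 * absG q)⁻¹ := by
    rw [show (absG q)⁻¹ - (2 * absG q)⁻¹ = 1 / (2 * absG q) by field_simp; ring,
      div_mul_div_comm, div_le_div_iff₀ (by positivity) (by positivity)]
    nlinarith [Real.sqrt_two_lt_three_halves]
  have := inv_absG_le_norm_mul_div_sub hq hco hndvd k
  rw [hsplit] at this
  linarith [norm_sub_le ((Δ : ℂ) * θ - k) (Δ * (θ - a / q))]

end Approximation

lemma Int.abs_sub_lt_of_ediv_eq {x y L : ℤ} (hL : 0 < L) (h : x / L = y / L) : |x - y| < L := by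
  have hx := Int.mul_ediv_add_emod x L
  have hy := Int.mul_ediv_add_emod y L
  have := Int.emod_nonneg x hL.ne'
  have := Int.emod_nonneg y hL.ne'
  have := Int.emod_lt_of_pos x hL
  have := Int.emod_lt_of_pos y hL
  rw [h] at hx
  rw [abs_lt]
  constructor <;> linarith

lemma Int.ediv_mem_Icc {m K L : ℤ} (hL : 0 < L) (h : |m| ≤ K * L) : m / L ∈ Icc (-K) K := by
  rw [abs_le] at h
  rw [mem_Icc, Int.le_ediv_iff_mul_le hL, Int.ediv_le_iff_le_mul hL, neg_mul]
  constructor <;> nlinarith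

lemma exists_norm_sub_sub_lt {M : ℕ} (hM : 0 < M) {u v : ℂ} (hre : cell M u.re = cell M v.re)
    (him : cell M u.im = cell M v.im) : ∃ k : GaussianInt, ‖u - v - k‖ < √2 / M := by
  set k : GaussianInt := ⟨⌊u.re⌋ - ⌊v.re⌋, ⌊u.im⌋ - ⌊v.im⌋⟩
  have hk_re : (u - v - k).re = Int.fract u.re - Int.fract v.re := by
    simp only [k, Complex.sub_re, GaussianInt.re_toComplex, Int.fract]
    push_cast
    ring
  have hk_im : (u - v - k).im = Int.fract u.im - Int.fract v.im := by
    simp only [k, Complex.sub_im, GaussianInt.im_toComplex, Int.fract]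
    push_cast
    ring
  refine ⟨k, (Complex.norm_le_sqrt_two_mul_max _).trans_lt ?_⟩
  rw [hk_re, hk_im, div_eq_mul_one_div]
  gcongr
  exact max_lt (abs_fract_sub_fract_lt_of_cell_eq hM hre) (abs_fract_sub_fract_lt_of_cell_eq hM him)

noncomputable def gridCell (L M : ℕ) (θ : ℂ) (n : GaussianInt) : (ℤ × ℤ) × ℕ × ℕ :=
  ((n.re / L, n.im / L), cell M ((n : ℂ) * θ).im, cell M ((n : ℂ) * θ).re)

lemma gridCell_injective {θ : ℂ} {a q : GaussianInt} (hq : q ≠ 0) (hco : IsCoprime a q)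
    (hθ : ‖θ - a / q‖ ≤ (2 + √2) / absG q ^ 2) {L M : ℕ} (hL0 : 0 < L)
    (hL : (L : ℝ) - 1 ≤ absG q / 15) (hM : 4 * absG q ≤ M) :
    Function.Injective (gridCell L M θ) := by
  intro n n' h
  simp only [gridCell, Prod.mk.injEq] at h
  obtain ⟨⟨hre, him⟩, hcell_im, hcell_re⟩ := h
  by_contra hne
  have hA := one_le_absG hq
  have hM0 : 0 < M := by exact_mod_cast (by linarith : (0 : ℝ) < M)
  have hcoord : ∀ {x y : ℤ}, x / L = y / L → |((x - y : ℤ) : ℝ)| ≤ L - 1 := fun {x y} h ↦ by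
    have := Int.abs_sub_lt_of_ediv_eq (by exact_mod_cast hL0) h
    exact_mod_cast Int.le_sub_one_iff.2 this
  have hΔ : absG (n - n') ≤ absG q / 10 := by
    calc absG (n - n') ≤ √2 * (L - 1) :=
          absG_le_sqrt_two_mul (by simpa using hcoord hre) (by simpa using hcoord him)
      _ ≤ absG q / 10 := by nlinarith [Real.sqrt_two_lt_three_halves, Real.sqrt_nonneg 2]
  obtain ⟨k, hk⟩ := exists_norm_sub_sub_lt hM0 hcell_re hcell_im
  have hlow := inv_two_mul_absG_le_norm_mul_sub hq hco hθ (sub_ne_zero.2 hne) hΔ k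
  rw [map_sub, sub_mul] at hlow
  have : √2 / M ≤ (2 * absG q)⁻¹ := by
    rw [div_le_iff₀ (by positivity)]
    field_simp
    nlinarith [Real.sqrt_two_lt_three_halves]
  linarith

lemma finsum_mem_le_sum_of_injOn {α β M : Type*} [AddCommMonoid M] [PartialOrder M]
    [IsOrderedAddMonoid M] {s : Set α} {T : Finset β} {φ : α → β} {f : α → M} {F : β → M}
    (hinj : Set.InjOn φ s) (hmaps : Set.MapsTo φ s T) (hf : ∀ x ∈ s, f x ≤ F (φ x))
    (hF : ∀ p ∈ T, 0 ≤ F p) : ∑ᶠ x ∈ s, f x ≤ ∑ p ∈ T, F p := by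
  classical
  have hs : s.Finite := Set.Finite.of_finite_image (T.finite_toSet.subset hmaps.image_subset) hinj
  rw [finsum_mem_eq_finite_toFinset_sum _ hs]
  calc ∑ x ∈ hs.toFinset, f x ≤ ∑ x ∈ hs.toFinset, F (φ x) :=
        sum_le_sum fun x hx ↦ hf x (hs.mem_toFinset.1 hx)
    _ = ∑ p ∈ hs.toFinset.image φ, F p := (sum_image (by simpa using hinj)).symm
    _ ≤ ∑ p ∈ T, F p := by
        refine sum_le_sum_of_subset_of_nonneg ?_ fun p hp _ ↦ hF p hp
        simpa [image_subset_iff] using fun x hx ↦ hmaps hx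

lemma Gsum_le_sq_mul_sq {θ : ℂ} {L M : ℕ} (hL : 0 < L) (hM : 0 < M)
    (hinj : Function.Injective (gridCell L M θ)) (y z : ℝ) :
    Gsum θ y z ≤ (2 * ⌈√z / L⌉₊ + 1) ^ 2 *
      (∑ i ∈ range M, distWeight M y (min i (M - 1 - i))) ^ 2 := by
  set K := ⌈√z / L⌉₊
  set w : ℕ → ℝ := fun i ↦ distWeight M y (min i (M - 1 - i))
  set B := Icc (-(K : ℤ)) K
  have hw : ∀ i, 0 ≤ w i := fun i ↦ distWeight_nonneg _ _ _
  have hcoord : ∀ {m : ℤ}, (m : ℝ) ^ 2 ≤ z → m / L ∈ B := fun {m} hm ↦ by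
    refine Int.ediv_mem_Icc (by exact_mod_cast hL) ?_
    have hKL : √z ≤ K * L := (div_le_iff₀ (by positivity)).1 (Nat.le_ceil _)
    exact_mod_cast (Real.abs_le_sqrt hm).trans hKL
  have hcardB : (#B : ℝ) = 2 * K + 1 := by
    rw [Int.card_Icc, show (K : ℤ) + 1 - -K = 2 * K + 1 by ring]
    norm_cast
  calc Gsum θ y z ≤ ∑ p ∈ (B ×ˢ B) ×ˢ (range M ×ˢ range M), w p.2.1 * w p.2.2 := by
        refine finsum_mem_le_sum_of_injOn hinj.injOn ?_ ?_ fun p _ ↦ mul_nonneg (hw _) (hw _)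
        · rintro n ⟨-, hn⟩
          rw [Nm_eq_sq_add_sq] at hn
          simp only [gridCell, coe_product, coe_range, Set.mem_prod, mem_coe, Set.mem_Iio]
          exact ⟨⟨hcoord (by nlinarith), hcoord (by nlinarith)⟩, cell_lt hM _, cell_lt hM _⟩
        · intro n _
          exact mul_le_mul (sqrt_minInv_le_distWeight hM _ _) (sqrt_minInv_le_distWeight hM _ _)
            (Real.sqrt_nonneg _) (hw _)
    _ = (2 * K + 1) ^ 2 * (∑ i ∈ range M, w i) ^ 2 := by
        simp only [sum_product, ← sum_mul_sum, sum_const, nsmul_eq_mul, card_product,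
          Nat.cast_mul, hcardB]
        ring

lemma two_mul_ceil_add_one_sq_le {z A L : ℝ} (hz : 0 ≤ z) (hA : 0 < A) (hL : A / 15 < L) :
    (2 * ⌈√z / L⌉₊ + 1 : ℝ) ^ 2 ≤ 1800 * (1 + z / A ^ 2) := by
  have hL0 : 0 < L := lt_trans (by positivity) hL
  have hceil : (⌈√z / L⌉₊ : ℝ) < √z / L + 1 := Nat.ceil_lt_add_one (by positivity)
  have hdiv : √z / L ≤ 15 * (√z / A) := by
    rw [mul_div_assoc', div_le_div_iff₀ (by positivity) (by positivity)]
    nlinarith [Real.sqrt_nonneg z]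
  have hsq : (√z / A) ^ 2 = z / A ^ 2 := by rw [div_pow, Real.sq_sqrt hz]
  calc (2 * ⌈√z / L⌉₊ + 1 : ℝ) ^ 2 ≤ (30 * (√z / A) + 3) ^ 2 :=
        pow_le_pow_left₀ (by positivity) (by linarith) 2
    _ ≤ 1800 * (1 + z / A ^ 2) := by nlinarith [sq_nonneg (30 * (√z / A) - 3)]

lemma sum_distWeight_min_sq_le {M : ℕ} {A : ℝ} (hA : 1 ≤ A) (hM : (M : ℝ) < 4 * A + 1) (y : ℝ) :
    (∑ i ∈ range M, distWeight M y (min i (M - 1 - i))) ^ 2 ≤ 800 * (√y + A ^ 2) := by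
  have hsq : √√y ^ 2 = √y := Real.sq_sqrt (Real.sqrt_nonneg y)
  calc (∑ i ∈ range M, distWeight M y (min i (M - 1 - i))) ^ 2 ≤ (2 * √√y + 20 * A) ^ 2 :=
        pow_le_pow_left₀ (sum_nonneg fun _ _ ↦ distWeight_nonneg _ _ _)
          (by linarith [sum_distWeight_min_le M y]) 2
    _ ≤ 800 * (√y + A ^ 2) := by nlinarith [sq_nonneg (2 * √√y - 20 * A)]

lemma Gsum_le_of_approx {θ : ℂ} {a q : GaussianInt} (hq : q ≠ 0) (hco : IsCoprime a q)
    (hθ : ‖θ - a / q‖ ≤ (2 + √2) / absG q ^ 2) (y : ℝ) {z : ℝ} (hz : 0 ≤ z) :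
    Gsum θ y z ≤ 1440000 * (1 + z / absG q ^ 2) * (√y + absG q ^ 2) := by
  set A := absG q
  have hA := one_le_absG hq
  set L := ⌊A / 15⌋₊ + 1
  set M := ⌈4 * A⌉₊
  have hL0 : 0 < L := Nat.succ_pos _
  have hL_le : (L : ℝ) - 1 ≤ A / 15 := by
    simpa [L] using Nat.floor_le (by positivity : 0 ≤ A / 15)
  have hL_gt : A / 15 < L := by
    simpa [L] using Nat.lt_floor_add_one (A / 15)
  have hM_ge : 4 * A ≤ M := Nat.le_ceil _
  have hM_lt : (M : ℝ) < 4 * A + 1 := Nat.ceil_lt_add_one (by positivity)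
  have hM0 : 0 < M := by exact_mod_cast (by linarith : (0 : ℝ) < M)
  calc Gsum θ y z ≤ (2 * ⌈√z / L⌉₊ + 1 : ℝ) ^ 2 *
        (∑ i ∈ range M, distWeight M y (min i (M - 1 - i))) ^ 2 :=
        Gsum_le_sq_mul_sq hL0 hM0 (gridCell_injective hq hco hθ hL0 hL_le hM_ge) y z
    _ ≤ (1800 * (1 + z / A ^ 2)) * (800 * (√y + A ^ 2)) :=
        mul_le_mul (two_mul_ceil_add_one_sq_le hz (by positivity) hL_gt)
          (sum_distWeight_min_sq_le hA hM_lt y) (sq_nonneg _) (by positivity)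
    _ = 1440000 * (1 + z / A ^ 2) * (√y + A ^ 2) := by ring

theorem Gsum_bound :
    ∃ c : ℝ, 0 < c ∧
      ∀ (θ : ℂ) (a q : GaussianInt), q ≠ 0 → IsCoprime a q →
        ‖θ - GaussianInt.toComplex a / GaussianInt.toComplex q‖ ≤
          (2 + Real.sqrt 2) / absG q ^ 2 →
        ∀ y z : ℝ, 1 ≤ y → 1 ≤ z →
          Gsum θ y z ≤
            c * (1 + z / absG q ^ 2) * (Real.sqrt y + absG q ^ 2) * (Real.log (2 * y)) ^ 2 := by
  refine ⟨4000000, by norm_num, fun θ a q hq hco hθ y z hy hz ↦ ?_⟩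
  have hlog : 0.6 ≤ Real.log (2 * y) :=
    (by linarith [Real.log_two_gt_d9] : (0.6 : ℝ) ≤ Real.log 2).trans
      (Real.log_le_log (by norm_num) (by linarith))
  have hX : 0 ≤ (1 + z / absG q ^ 2) * (√y + absG q ^ 2) := by positivity
  calc Gsum θ y z ≤ 1440000 * (1 + z / absG q ^ 2) * (√y + absG q ^ 2) :=
        Gsum_le_of_approx hq hco hθ y (by linarith)
    _ ≤ 4000000 * (1 + z / absG q ^ 2) * (√y + absG q ^ 2) * Real.log (2 * y) ^ 2 := by
        nlinarith [mul_le_mul_of_nonneg_left (by nlinarith : (0.36 : ℝ) ≤ Real.log (2 * y) ^ 2) hX]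
end
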